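/- Let θ > 0 and let {η_t} satisfy 0 < η₀ ≤ 1/θ and η_{t+1} = η_t(1 - (θ/2)η_t). Then ∑_{t=0}^∞ η_t = ∞. -/

import Mathlib

/-!
With `a = θ / 2`, the map `x ↦ x (1 - a x)` sends `(0, 1/(2a)]` into itself, and on that interval
`1 / (x (1 - a x)) = 1 / x + a / (1 - a x) ≤ 1 / x + 2a`. Hence `1 / η_t` grows at most linearly,
`η_t ≥ c / (t + 1)` for some `c > 0`, and the partial sums dominate a multiple of the harmonic series.
-/

open Filter Finset

section Step

variable {a x : ℝ}

lemma mul_one_sub_mul_pos (hx : 0 < x) (hax : a * x ≤ 1 / 2) : 0 < x * (1 - a * x) :=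
  mul_pos hx (by linarith)

lemma mul_one_sub_mul_le (ha : 0 ≤ a) (hx : 0 < x) : x * (1 - a * x) ≤ x := by
  nlinarith [mul_nonneg ha (mul_pos hx hx).le]

lemma inv_mul_one_sub_mul_le (ha : 0 ≤ a) (hx : 0 < x) (hax : a * x ≤ 1 / 2) :
    (x * (1 - a * x))⁻¹ ≤ x⁻¹ + 2 * a := by
  have hpos : 0 < 1 - a * x := by linarith
  rw [inv_le_iff_one_le_mul₀' (mul_pos hx hpos)]
  calc (1 : ℝ) ≤ 1 + a * x * (1 - 2 * a * x) := by nlinarith [mul_nonneg ha hx.le]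
    _ = x * (1 - a * x) * (x⁻¹ + 2 * a) := by field_simp; ring

end Step

section Sequence

variable {a : ℝ} {u : ℕ → ℝ}

lemma pos_and_mul_le_half_of_rec (ha : 0 ≤ a) (hu0 : 0 < u 0) (hau0 : a * u 0 ≤ 1 / 2)
    (hrec : ∀ t, u (t + 1) = u t * (1 - a * u t)) (t : ℕ) : 0 < u t ∧ a * u t ≤ 1 / 2 := by
  induction t with
  | zero => exact ⟨hu0, hau0⟩
  | succ t ih =>
    obtain ⟨hpos, hle⟩ := ih
    rw [hrec t]
    exact ⟨mul_one_sub_mul_pos hpos hle,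
      (mul_le_mul_of_nonneg_left (mul_one_sub_mul_le ha hpos) ha).trans hle⟩

lemma inv_le_inv_zero_add_mul_of_rec (ha : 0 ≤ a) (hu0 : 0 < u 0) (hau0 : a * u 0 ≤ 1 / 2)
    (hrec : ∀ t, u (t + 1) = u t * (1 - a * u t)) (t : ℕ) :
    (u t)⁻¹ ≤ (u 0)⁻¹ + 2 * a * t := by
  induction t with
  | zero => simp
  | succ t ih =>
    obtain ⟨hpos, hle⟩ := pos_and_mul_le_half_of_rec ha hu0 hau0 hrec t
    rw [hrec t]
    push_cast
    linarith [inv_mul_one_sub_mul_le ha hpos hle]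

end Sequence

lemma tendsto_sum_range_atTop_of_inv_le_affine {u : ℕ → ℝ} {A B : ℝ} (hB : 0 ≤ B)
    (hpos : ∀ t, 0 < u t) (hinv : ∀ t, (u t)⁻¹ ≤ A + B * t) :
    Tendsto (fun n => ∑ t ∈ range n, u t) atTop atTop := by
  have hA : 0 < A := by simpa using (inv_pos.2 (hpos 0)).trans_le (hinv 0)
  have hlow : ∀ t : ℕ, (A + B)⁻¹ * (1 / (t + 1)) ≤ u t := fun t => by
    have hdom : A + B * t ≤ (A + B) * (t + 1) := by nlinarith [t.cast_nonneg (α := ℝ)]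
    rw [← one_div, div_mul_div_comm, one_mul, div_le_iff₀ (by positivity),
      ← inv_le_iff_one_le_mul₀' (hpos t)]
    linarith [hinv t]
  have hc : 0 < (A + B)⁻¹ := inv_pos.2 (by linarith)
  refine tendsto_atTop_mono (fun n => ?_)
    (Real.tendsto_sum_range_one_div_nat_succ_atTop.const_mul_atTop hc)
  rw [mul_sum]
  exact sum_le_sum fun t _ => hlow t

theorem selftuned_stepsize_not_summable (θ : ℝ) (hθ : 0 < θ)
    (η : ℕ → ℝ) (h0 : 0 < η 0) (h0' : η 0 ≤ 1 / θ)
    (hrec : ∀ t, η (t + 1) = η t * (1 - θ / 2 * η t)) :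
    Filter.Tendsto (fun n => ∑ t ∈ Finset.range n, η t) Filter.atTop Filter.atTop := by
  have ha : 0 ≤ θ / 2 := by positivity
  have hη0 : θ / 2 * η 0 ≤ 1 / 2 := by
    calc θ / 2 * η 0 ≤ θ / 2 * (1 / θ) := mul_le_mul_of_nonneg_left h0' ha
      _ = 1 / 2 := by field_simp
  exact tendsto_sum_range_atTop_of_inv_le_affine (by positivity : 0 ≤ 2 * (θ / 2))
    (fun t => (pos_and_mul_le_half_of_rec ha h0 hη0 hrec t).1) (inv_le_inv_zero_add_mul_of_rec ha h0 hη0 hrec)
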